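/- For every integer b ≥ 1 and every real κ > −1 it holds that ∑_{m=1}^{b} C(b+κ, b−m)·C(m−1+κ, m−1) / [C(b, m−1)·(b−m+1)] = C(b+κ, b) · ∑_{k=1}^{b} 1/(k+κ). Consequently, the limiting distribution of the initial bucket size, given by P{K=m} = C(b+κ, b−m)·C(m−1+κ, m−1)/[C(b,m−1)·(b−m+1)·C(b+κ,b)·(H_{b+κ}−H_κ)] for 1 ≤ m ≤ b, is a proper probability distribution; the case κ = 1/(d−1) corresponds to (b,d)-ary increasing trees, κ = −1/(α+1) to (b,α)-plane oriented recursive trees, and κ = 0 gives the Zipf law P{K=m} = 1/(m·H_b) for bucket recursive trees. -/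

import Mathlib

/-!
Every summand equals `C(b+κ, b) / (m+κ)`. Indeed, trinomial revision with `x = b+κ` gives
`C(b, m)·C(b+κ, b) = C(b+κ, b-m)·C(m+κ, m)`, absorption gives `m·C(m+κ, m) = (m+κ)·C(m-1+κ, m-1)`,
and `m·C(b, m) = (b-m+1)·C(b, m-1)`. Summing gives the identity; dividing by
`C(b+κ, b)·∑ 1/(k+κ)`, which is positive for `κ > -1`, gives total mass `1`.
-/

/-- The generalized binomial coefficient `C(x, n) = x(x-1)⋯(x-n+1)/n!`. -/
noncomputable def genBinom (x : ℝ) (n : ℕ) : ℝ :=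
    (∏ i ∈ Finset.range n, (x - i)) / (n.factorial : ℝ)

theorem genBinom_eq_choose (x : ℝ) (n : ℕ) : genBinom x n = Ring.choose x n := by
  rw [Ring.choose_eq_smul, genBinom, ← descPochhammer_eval_eq_prod_range, smul_eq_mul,
    inv_mul_eq_div, ← Polynomial.aeval_eq_smeval, Polynomial.aeval_def, ← Polynomial.eval_map,
    descPochhammer_map]

theorem genBinom_natCast (n k : ℕ) : genBinom n k = n.choose k := by
  rw [genBinom_eq_choose, Ring.choose_natCast]

theorem choose_mul_genBinom (x : ℝ) {n k : ℕ} (h : k ≤ n) :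
    n.choose k * genBinom x n = genBinom x k * genBinom (x - k) (n - k) := by
  simp only [genBinom_eq_choose, ← Ring.choose_smul_choose x h, nsmul_eq_mul]

theorem succ_mul_genBinom_succ (x : ℝ) (n : ℕ) :
    (n + 1) * genBinom (x + 1) (n + 1) = (x + 1) * genBinom x n := by
  rw [genBinom, genBinom, Finset.prod_range_succ', Nat.factorial_succ]
  push_cast
  field_simp
  simp only [add_sub_add_right_eq_sub, sub_zero]
  ring

theorem genBinom_pos {x : ℝ} {n : ℕ} (h : (n : ℝ) - 1 < x) : 0 < genBinom x n := by
  refine div_pos (Finset.prod_pos fun i hi => ?_) (by positivity)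
  have : (i : ℝ) + 1 ≤ n := by exact_mod_cast Finset.mem_range.mp hi
  linarith

theorem genBinom_mul_genBinom_div_eq_div {b m : ℕ} {κ : ℝ} (hm : 1 ≤ m) (hmb : m ≤ b)
    (hκ : (m : ℝ) + κ ≠ 0) :
    genBinom ((b : ℝ) + κ) (b - m) * genBinom ((m : ℝ) - 1 + κ) (m - 1)
        / (genBinom (b : ℝ) (m - 1) * ((b : ℝ) - (m : ℝ) + 1))
      = genBinom ((b : ℝ) + κ) b / ((m : ℝ) + κ) := by
  obtain ⟨n, rfl⟩ : ∃ n, m = n + 1 := ⟨m - 1, by omega⟩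
  have hnb : (n : ℝ) + 1 ≤ b := by exact_mod_cast hmb
  have trinomial := choose_mul_genBinom ((b : ℝ) + κ) (Nat.sub_le b (n + 1))
  rw [Nat.choose_symm hmb, Nat.sub_sub_self hmb, Nat.cast_sub hmb, Nat.cast_succ,
    show (b : ℝ) + κ - (b - (n + 1)) = n + κ + 1 by ring] at trinomial
  have absorption := succ_mul_genBinom_succ ((n : ℝ) + κ) n
  have choose_succ : (b.choose (n + 1) : ℝ) * (n + 1) = b.choose n * ((b : ℝ) - n) := by
    rw [← Nat.cast_sub (by omega), ← Nat.cast_succ, ← Nat.cast_mul, ← Nat.cast_mul,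
      Nat.choose_succ_right_eq]
  have hchoose : (b.choose n : ℝ) ≠ 0 := by exact_mod_cast (Nat.choose_pos (by omega)).ne'
  rw [Nat.add_sub_cancel, genBinom_natCast, Nat.cast_succ, add_sub_cancel_right,
    div_eq_div_iff (mul_ne_zero hchoose (by linarith)) (by push_cast at hκ; exact hκ)]
  linear_combination (-genBinom ((b : ℝ) + κ) (b - (n + 1))) * absorption
    - (n + 1) * trinomial + genBinom ((b : ℝ) + κ) b * choose_succ

/-- For every integer `b ≥ 1` and real `κ > -1`,
`∑_{m=1}^{b} C(b+κ, b-m)·C(m-1+κ, m-1) / (C(b, m-1)·(b-m+1)) = C(b+κ, b)·∑_{k=1}^{b} 1/(k+κ)`;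
consequently the limiting distribution of the initial bucket size,
`P{K = m} = C(b+κ, b-m)·C(m-1+κ, m-1)/(C(b,m-1)·(b-m+1)·C(b+κ,b)·(H_{b+κ}-H_κ))`,
sums to `1`, i.e. is a proper probability distribution. -/
theorem initial_bucket_limit_law_is_probability (b : ℕ) (hb : 1 ≤ b) (κ : ℝ) (hκ : -1 < κ) :
    (∑ m ∈ Finset.Icc 1 b,
        genBinom ((b : ℝ) + κ) (b - m) * genBinom ((m : ℝ) - 1 + κ) (m - 1)
          / (genBinom (b : ℝ) (m - 1) * ((b : ℝ) - (m : ℝ) + 1))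
      = genBinom ((b : ℝ) + κ) b * ∑ k ∈ Finset.Icc 1 b, 1 / ((k : ℝ) + κ)) ∧
    (∑ m ∈ Finset.Icc 1 b,
        genBinom ((b : ℝ) + κ) (b - m) * genBinom ((m : ℝ) - 1 + κ) (m - 1)
          / (genBinom (b : ℝ) (m - 1) * ((b : ℝ) - (m : ℝ) + 1)
              * genBinom ((b : ℝ) + κ) b * ∑ k ∈ Finset.Icc 1 b, 1 / ((k : ℝ) + κ))
      = 1) := by
  have hpos : ∀ k ∈ Finset.Icc 1 b, 0 < (k : ℝ) + κ := fun k hk => by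
    have : (1 : ℝ) ≤ k := by exact_mod_cast (Finset.mem_Icc.mp hk).1
    linarith
  have hsum : ∑ m ∈ Finset.Icc 1 b,
      genBinom ((b : ℝ) + κ) (b - m) * genBinom ((m : ℝ) - 1 + κ) (m - 1)
        / (genBinom (b : ℝ) (m - 1) * ((b : ℝ) - (m : ℝ) + 1))
      = genBinom ((b : ℝ) + κ) b * ∑ k ∈ Finset.Icc 1 b, 1 / ((k : ℝ) + κ) := by
    rw [Finset.mul_sum]
    refine Finset.sum_congr rfl fun m hm => ?_
    obtain ⟨h1m, hmb⟩ := Finset.mem_Icc.mp hm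
    rw [genBinom_mul_genBinom_div_eq_div h1m hmb (hpos m hm).ne', mul_one_div]
  have hC : 0 < genBinom ((b : ℝ) + κ) b := genBinom_pos (by linarith)
  have hH : 0 < ∑ k ∈ Finset.Icc 1 b, 1 / ((k : ℝ) + κ) :=
    Finset.sum_pos (fun k hk => one_div_pos.mpr (hpos k hk)) (Finset.nonempty_Icc.mpr hb)
  refine ⟨hsum, ?_⟩
  simp only [mul_assoc _ (genBinom _ b), ← div_div _ _ (_ * _)]
  rw [← Finset.sum_div, hsum, div_self (mul_pos hC hH).ne']
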